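/- arXiv:1508.06827 — 3 statements merged into one kernel-verified Lean document; each statement's English description precedes it below -/
import Mathlib

section
/- If a, b : ℤ and f : ℤ → ℤ satisfy a + b = 1, f a + f b = 0, and the four local instances of the monotonicity axiom (a ≤ b → f a ≤ f b, b ≤ a → f b ≤ f a, a ≤ a → f a ≤ f a, b ≤ b → f b ≤ f b), then there exists a monotone function g : ℤ → ℤ with g a = f a, g b = f b, a + b = 1 and g a + g b = 0. -/
lemma step_mono (u : ℤ) (c d : ℤ) (hcd : c ≤ d) :
    Monotone (fun x : ℤ => if x ≤ u then c else d) := by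
  intro x y hxy
  by_cases hx : x ≤ u <;> by_cases hy : y ≤ u <;> simp [hx, hy, hcd]
  exact absurd (hxy.trans hy) hx

theorem stmt_2 (a b : ℤ) (f : ℤ → ℤ)
    (h1 : a + b = 1) (h2 : f a + f b = 0)
    (i1 : a ≤ b → f a ≤ f b) (i2 : b ≤ a → f b ≤ f a)
    (i3 : a ≤ a → f a ≤ f a) (i4 : b ≤ b → f b ≤ f b) :
    ∃ g : ℤ → ℤ, Monotone g ∧ g a = f a ∧ g b = f b ∧
      a + b = 1 ∧ g a + g b = 0 := by
  rcases lt_trichotomy a b with h | h | h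
  · refine ⟨fun x => if x ≤ a then f a else f b, step_mono a _ _ (i1 h.le), ?_, ?_, h1, ?_⟩
    · simp
    · simp [not_le.mpr h]
    · simpa [not_le.mpr h] using h2
  · omega
  · refine ⟨fun x => if x ≤ b then f b else f a, step_mono b _ _ (i2 h.le), ?_, ?_, h1, ?_⟩
    · simp [not_le.mpr h]
    · simp
    · simpa [not_le.mpr h] using h2
end

section
/- Over a densely ordered set, every partial strictly monotone function on a finite subset extends to a total strictly monotone function. Formally: if S ⊆ ℚ is finite and g : S → ℚ satisfies x < y → g x < g y for all x, y ∈ S, then there exists a strictly monotone f : ℚ → ℚ with f x = g x for all x ∈ S. -/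
/-!
Induct on the finite set, adding its points in increasing order. When a new largest point `a`
joins, keep the current extension up to the previous maximum `m` and continue it to the right
by the affine map through `(m, f m)` and `(a, g a)`; it has positive slope because
`f m = g m < g a`, and the two pieces agree at `m`, so the glued map is strictly monotone.
-/

open Set

variable {K : Type*} [Field K] [LinearOrder K] [IsStrictOrderedRing K]

theorem StrictMono.exists_strictMono_eqOn_Iic_apply_eq {f : K → K} (hf : StrictMono f)
    {m a b : K} (hma : m < a) (hb : f m < b) :
    ∃ f' : K → K, StrictMono f' ∧ EqOn f' f (Iic m) ∧ f' a = b := by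
  set c := (b - f m) / (a - m)
  have hc : 0 < c := div_pos (sub_pos.2 hb) (sub_pos.2 hma)
  set line : K → K := fun x => f m + c * (x - m)
  have hline : StrictMono line := fun x y hxy =>
    add_lt_add_right (mul_lt_mul_of_pos_left (sub_lt_sub_right hxy m) hc) _
  refine ⟨fun x => if x ≤ m then f x else line x, ?_, fun x hx => if_pos hx, ?_⟩
  · refine StrictMonoOn.Iic_union_Ici (a := m)
      ((hf.strictMonoOn _).congr fun x hx => (if_pos hx).symm)
      ((hline.strictMonoOn _).congr fun x hx => ?_)
    split_ifs with hxm
    · obtain rfl := le_antisymm hxm hx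
      simp [line]
    · rfl
  · simp only [if_neg hma.not_ge, line, c]
    field_simp [(sub_pos.2 hma).ne']
    ring

theorem Finset.exists_strictMono_eqOn (S : Finset K) {g : K → K} (hg : StrictMonoOn g S) :
    ∃ f : K → K, StrictMono f ∧ EqOn f g S := by
  induction S using Finset.induction_on_max with
  | empty => exact ⟨id, strictMono_id, by simp⟩
  | insert a s hlt ih =>
    rw [Finset.coe_insert] at hg ⊢
    rcases s.eq_empty_or_nonempty with rfl | hs
    · exact ⟨fun x => x + (g a - a), strictMono_id.add_const _, by simp⟩
    obtain ⟨f, hf, hfg⟩ := ih (hg.mono (Set.subset_insert a _))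
    set m := s.max' hs
    have hm : m ∈ s := s.max'_mem hs
    have hgm : f m < g a := by
      rw [hfg hm]
      exact hg (Set.mem_insert_of_mem _ hm) (Set.mem_insert a _) (hlt m hm)
    obtain ⟨f', hf', hf'f, hf'a⟩ := hf.exists_strictMono_eqOn_Iic_apply_eq (hlt m hm) hgm
    refine ⟨f', hf', ?_⟩
    rintro x (rfl | hx)
    · exact hf'a
    · exact (hf'f (s.le_max' x hx)).trans (hfg hx)

theorem stmt_4 (S : Finset ℚ) (g : ℚ → ℚ)
    (hg : ∀ x ∈ S, ∀ y ∈ S, x < y → g x < g y) :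
    ∃ f : ℚ → ℚ, StrictMono f ∧ ∀ x ∈ S, f x = g x :=
  S.exists_strictMono_eqOn hg
end

section
/- For any linearly ordered type α and finite S ⊆ α, a function g : S → ℤ monotone on S (x ≤ y → g x ≤ g y for x, y ∈ S) extends to a monotone function f : α → ℤ. -/
theorem stmt_17 (α : Type*) [LinearOrder α] (S : Finset α) (g : α → ℤ)
    (hg : ∀ x ∈ S, ∀ y ∈ S, x ≤ y → g x ≤ g y) :
    ∃ f : α → ℤ, Monotone f ∧ ∀ x ∈ S, f x = g x := by
  have hmono : MonotoneOn g S := hg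
  have hfin : (g '' S).Finite := S.finite_toSet.image g
  obtain ⟨f, hf, hfg⟩ := hmono.exists_monotone_extension hfin.bddBelow hfin.bddAbove
  exact ⟨f, hf, fun x hx => (hfg hx).symm⟩
end
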